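/- Goal regression is sound: let a be a ground action and G a set of facts that is regressable over a (i.e., del_i(a) ∩ G = ∅ for every outcome i). If an HL state s satisfies every regressed condition, i.e., R ⊆ s for every R ∈ regr(G, a), then a is applicable in s and every successor state t ∈ succ(s, a) satisfies G ⊆ t. -/
import Mathlib


/-!
STATEMENT 7: Goal regression is sound: if G is regressable over a and an HL
state s satisfies every regressed condition R ∈ regr(G, a), then a is
applicable in s and every successor t ∈ succ(s, a) satisfies G ⊆ t.
-/

namespace Bison

/-- A fact is a predicate symbol together with a list of objects of the
predicate's arity. -/
def HLFact (P O : Type*) (ar : P → ℕ) : Type _ := (p : P) × (Fin (ar p) → O)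

/-- An HL state is a set of facts. -/
abbrev HLState (P O : Type*) (ar : P → ℕ) := Set (HLFact P O ar)

variable {P O : Type*} {ar : P → ℕ}

/-- A ground action: a precondition and finitely many (`i = 1, …, n` with
`n ≥ 1`) nondeterministic outcomes, each with add and delete effects. -/
structure GroundAction (P O : Type*) (ar : P → ℕ) where
  pre : Set (HLFact P O ar)
  n : ℕ
  npos : 0 < n
  add : Fin n → Set (HLFact P O ar)
  del : Fin n → Set (HLFact P O ar)

/-- `a` is applicable in `s` if `pre(a) ⊆ s`. -/
def Applicable (a : GroundAction P O ar) (s : HLState P O ar) : Prop :=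
  a.pre ⊆ s

/-- The successor states: `succ(s, a) = {(s \ del_i(a)) ∪ add_i(a) : i}`. -/
def succs (s : HLState P O ar) (a : GroundAction P O ar) :
    Set (HLState P O ar) :=
  { t | ∃ i : Fin a.n, t = (s \ a.del i) ∪ a.add i }

/-- `G` is regressable over `a`: `del_i(a) ∩ G = ∅` for every outcome `i`. -/
def Regressable (G : HLState P O ar) (a : GroundAction P O ar) : Prop :=
  ∀ i : Fin a.n, a.del i ∩ G = ∅

/-- The regression of `G` over `a`:
`regr(G, a) = {(G \ add_i(a)) ∪ pre(a) : i = 1, …, n}`. -/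
def regr (G : HLState P O ar) (a : GroundAction P O ar) :
    Set (HLState P O ar) :=
  { R | ∃ i : Fin a.n, R = (G \ a.add i) ∪ a.pre }

/-- Goal regression is sound: if `G` is regressable over `a` and `s`
satisfies every regressed condition `R ∈ regr(G, a)`, then `a` is applicable
in `s` and every successor `t ∈ succ(s, a)` satisfies `G ⊆ t`. -/
theorem regression_sound (a : GroundAction P O ar) (G s : HLState P O ar)
    (hreg : Regressable G a) (hsat : ∀ R ∈ regr G a, R ⊆ s) :
    Applicable a s ∧ ∀ t ∈ succs s a, G ⊆ t := by
  constructor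
  · intro x hx
    exact hsat _ ⟨⟨0, a.npos⟩, rfl⟩ (Or.inr hx)
  · rintro t ⟨i, rfl⟩ x hxG
    by_cases h : x ∈ a.add i
    · exact Or.inr h
    · left
      refine ⟨hsat _ ⟨i, rfl⟩ (Or.inl ⟨hxG, h⟩), fun hd => ?_⟩
      exact absurd (Set.mem_inter hd hxG) (by simp [hreg i])


end Bison
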